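/- arXiv:1908.06879 — 4 statements merged into one kernel-verified Lean document; each statement's English description precedes it below -/
import Mathlib

section
/- Let C be a locally presentable category with a cofibrantly generated weak factorization system (L, R) such that ∅ → X lies in L for every object X, equipped with an exact cylinder I and a class An(I) of right I-anodyne extensions. If W is a right I-fibrant object, then for every object X the relation on Hom_C(X, W) given by 'there exists an I-homotopy from f to g' is an equivalence relation. -/
set_option linter.unusedSectionVars false

open CategoryTheory CategoryTheory.Limits

universe v u

namespace Paper

variable {C : Type u} [Category.{v} C]

/-- The class of morphisms having the left lifting property against every morphism in `T`. -/
def llp (T : MorphismProperty C) : MorphismProperty C :=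
  fun _ _ f => ∀ ⦃X Y : C⦄ (g : X ⟶ Y), T g → HasLiftingProperty f g

/-- The class of morphisms having the right lifting property against every morphism in `T`. -/
def rlp (T : MorphismProperty C) : MorphismProperty C :=
  fun _ _ g => ∀ ⦃A B : C⦄ (f : A ⟶ B), T f → HasLiftingProperty f g

/-- The morphism property associated to a set of arrows. -/
def ofArrows (S : Set (Arrow C)) : MorphismProperty C :=
  fun _ _ f => Arrow.mk f ∈ S

/-- A (possibly large) category `J` is `κ`-filtered if every diagram in `J` indexed by a
small category of size `< κ` admits a cocone. -/
def IsCardinalFiltered (J : Cat.{v, v}) (κ : Cardinal.{v}) : Prop :=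
  ∀ K : Cat.{v, v}, Cardinal.mk (Arrow K) < κ → ∀ F : K ⥤ J, Nonempty (Cocone F)

/-- An object `X` is `κ`-presentable if `Hom(X, -)` preserves colimits of `κ`-filtered
diagrams. -/
def IsPresentableObj (κ : Cardinal.{v}) (X : C) : Prop :=
  ∀ J : Cat.{v, v}, IsCardinalFiltered J κ →
    PreservesColimitsOfShape J (coyoneda.obj (Opposite.op X))

/-- A category is locally presentable if it is cocomplete and there is a regular cardinal `κ`
and a small family of `κ`-presentable objects such that every object is a `κ`-filtered colimit
of objects of the family. -/
class LocallyPresentable (C : Type u) [Category.{v} C] extends HasColimits C : Prop where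
  exists_presentable_generator :
    ∃ κ : Cardinal.{v}, κ.IsRegular ∧
      ∃ (ι : Type v) (G : ι → C), (∀ i, IsPresentableObj κ (G i)) ∧
        ∀ X : C, ∃ (J : Cat.{v, v}) (F : J ⥤ C) (c : Cocone F),
          IsCardinalFiltered J κ ∧ Nonempty (IsColimit c) ∧
          (∀ j : J, ∃ i, Nonempty (F.obj j ≅ G i)) ∧ Nonempty (c.pt ≅ X)

/-- `(L, R)` is a cofibrantly generated weak factorization system such that every morphism
from the initial object is in `L`. -/
structure IsCofGenWFS [HasColimits C] (L R : MorphismProperty C) : Prop where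
  exists_generating_set : ∃ S : Set (Arrow C), Small.{v} S ∧ L = llp (rlp (ofArrows S))
  rlp_eq : R = rlp L
  factorization : ∀ ⦃X Y : C⦄ (f : X ⟶ Y),
    ∃ (Z : C) (i : X ⟶ Z) (p : Z ⟶ Y), L i ∧ R p ∧ i ≫ p = f
  initial_mem : ∀ X : C, L (initial.to X)

/-- A functorial cylinder on `C`. -/
structure Cylinder (C : Type u) [Category.{v} C] where
  I : C ⥤ C
  d0 : 𝟭 C ⟶ I
  d1 : 𝟭 C ⟶ I
  σ : I ⟶ 𝟭 C
  d0_σ : ∀ X : C, d0.app X ≫ σ.app X = 𝟙 X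
  d1_σ : ∀ X : C, d1.app X ≫ σ.app X = 𝟙 X

namespace Cylinder

variable (E : Cylinder C)

lemma d0_naturality' {K M : C} (f : K ⟶ M) :
    f ≫ E.d0.app M = E.d0.app K ≫ E.I.map f := by
  simpa using E.d0.naturality f

lemma d1_naturality' {K M : C} (f : K ⟶ M) :
    f ≫ E.d1.app M = E.d1.app K ≫ E.I.map f := by
  simpa using E.d1.naturality f

variable [HasColimits C]

/-- The canonical map `X ⊔ X ⟶ I(X)`. -/
noncomputable def ι (X : C) : X ⨿ X ⟶ E.I.obj X :=
  coprod.desc (E.d0.app X) (E.d1.app X)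

lemma ι_naturality {K M : C} (f : K ⟶ M) :
    coprod.map f f ≫ E.ι M = E.ι K ≫ E.I.map f := by
  have h0 := E.d0.naturality f
  have h1 := E.d1.naturality f
  simp only [Functor.id_map] at h0 h1
  apply coprod.hom_ext <;> simp [ι, h0, h1]

/-- The pushout-corner map `∂I ⊠ f : (M ⊔ M) ⊔_{K ⊔ K} I(K) ⟶ I(M)`. -/
noncomputable def boundaryBox {K M : C} (f : K ⟶ M) :
    pushout (coprod.map f f) (E.ι K) ⟶ E.I.obj M :=
  pushout.desc (E.ι M) (E.I.map f) (E.ι_naturality f)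

/-- The pushout-corner map `∂0 ⊠ f : M ⊔_K I(K) ⟶ I(M)`. -/
noncomputable def box0 {K M : C} (f : K ⟶ M) :
    pushout f (E.d0.app K) ⟶ E.I.obj M :=
  pushout.desc (E.d0.app M) (E.I.map f) (E.d0_naturality' f)

/-- The pushout-corner map `∂1 ⊠ f : M ⊔_K I(K) ⟶ I(M)`. -/
noncomputable def box1 {K M : C} (f : K ⟶ M) :
    pushout f (E.d1.app K) ⟶ E.I.obj M :=
  pushout.desc (E.d1.app M) (E.I.map f) (E.d1_naturality' f)

end Cylinder

/-- A cylinder is exact with respect to the class `L` if it preserves small colimits,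
the maps `X ⊔ X ⟶ I(X)` are in `L`, and the pushout-corner maps of morphisms of `L` are
again in `L`. -/
structure IsExactCylinder [HasColimits C] (E : Cylinder C) (L : MorphismProperty C) : Prop where
  preservesColimits : PreservesColimits E.I
  ι_mem : ∀ X : C, L (E.ι X)
  boundaryBox_mem : ∀ ⦃K M : C⦄ (f : K ⟶ M), L f → L (E.boundaryBox f)
  box0_mem : ∀ ⦃K M : C⦄ (f : K ⟶ M), L f → L (E.box0 f)
  box1_mem : ∀ ⦃K M : C⦄ (f : K ⟶ M), L f → L (E.box1 f)

/-- `An` is a class of right `I`-anodyne extensions. -/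
structure IsRightAnodyneClass [HasColimits C] (E : Cylinder C) (L : MorphismProperty C)
    (An : MorphismProperty C) : Prop where
  le : An ≤ L
  exists_generating_set : ∃ Λ : Set (Arrow C), Small.{v} Λ ∧ ofArrows Λ ≤ L ∧
    An = llp (rlp (ofArrows Λ))
  box1_mem : ∀ ⦃K M : C⦄ (f : K ⟶ M), L f → An (E.box1 f)
  boundaryBox_mem : ∀ ⦃K M : C⦄ (f : K ⟶ M), An f → An (E.boundaryBox f)

/-- `An` is a class of left `I`-anodyne extensions. -/
structure IsLeftAnodyneClass [HasColimits C] (E : Cylinder C) (L : MorphismProperty C)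
    (An : MorphismProperty C) : Prop where
  le : An ≤ L
  exists_generating_set : ∃ Λ : Set (Arrow C), Small.{v} Λ ∧ ofArrows Λ ≤ L ∧
    An = llp (rlp (ofArrows Λ))
  box0_mem : ∀ ⦃K M : C⦄ (f : K ⟶ M), L f → An (E.box0 f)
  boundaryBox_mem : ∀ ⦃K M : C⦄ (f : K ⟶ M), An f → An (E.boundaryBox f)

/-- A morphism is an `An`-fibration if it has the right lifting property against all
morphisms of `An`. -/
def IsFib (An : MorphismProperty C) {X Y : C} (p : X ⟶ Y) : Prop :=
  ∀ ⦃A B : C⦄ (f : A ⟶ B), An f → HasLiftingProperty f p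

/-- An object `W` is `An`-fibrant if the map `W ⟶ *` has the right lifting property against
all morphisms of `An`, i.e. every morphism to `W` extends along every morphism of `An`. -/
def IsFibrantObj (An : MorphismProperty C) (W : C) : Prop :=
  ∀ ⦃A B : C⦄ (f : A ⟶ B), An f → ∀ a : A ⟶ W, ∃ b : B ⟶ W, f ≫ b = a

namespace Cylinder

variable (E : Cylinder C)

/-- An `I`-homotopy from `f` to `g`. -/
def Homotopy {X Y : C} (f g : X ⟶ Y) : Prop :=
  ∃ h : E.I.obj X ⟶ Y, E.d0.app X ≫ h = f ∧ E.d1.app X ≫ h = g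

/-- `[X, Y]_I`, the quotient of `Hom(X, Y)` by the equivalence relation generated by
`I`-homotopy. -/
def HoHom (X Y : C) : Type v :=
  Quot (fun f g : X ⟶ Y => E.Homotopy f g)

/-- Precomposition `f^* : [B, W]_I ⟶ [A, W]_I`. -/
def precompQ {A B : C} (f : A ⟶ B) (W : C) : E.HoHom B W → E.HoHom A W :=
  Quot.lift (fun g => Quot.mk _ (f ≫ g)) (by
    rintro g g' ⟨h, h0, h1⟩
    apply Quot.sound
    refine ⟨E.I.map f ≫ h, ?_, ?_⟩
    · rw [← Category.assoc, ← E.d0_naturality' f, Category.assoc, h0]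
    · rw [← Category.assoc, ← E.d1_naturality' f, Category.assoc, h1])

end Cylinder

/-- `f` is a weak equivalence if it induces bijections `[B, W]_I ≅ [A, W]_I` for all
fibrant `W`. -/
def IsWeakEq (E : Cylinder C) (An : MorphismProperty C) {A B : C} (f : A ⟶ B) : Prop :=
  ∀ W : C, IsFibrantObj An W → Function.Bijective (E.precompQ f W)

/-- `f` is a retract of `f'`. -/
def IsRetractOf {X Y X' Y' : C} (f : X ⟶ Y) (f' : X' ⟶ Y') : Prop :=
  ∃ (i : X ⟶ X') (r : X' ⟶ X) (j : Y ⟶ Y') (s : Y' ⟶ Y),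
    i ≫ r = 𝟙 X ∧ j ≫ s = 𝟙 Y ∧ i ≫ f' = f ≫ j ∧ f' ≫ s = r ≫ f

/-- A model structure on a category: the classes of weak equivalences, cofibrations and
fibrations, subject to the two-out-of-three, retract, lifting and factorization axioms. -/
structure ModelStructure (C : Type u) [Category.{v} C] where
  weq : MorphismProperty C
  cof : MorphismProperty C
  fib : MorphismProperty C
  weq_id : ∀ X : C, weq (𝟙 X)
  weq_comp : ∀ ⦃X Y Z : C⦄ (f : X ⟶ Y) (g : Y ⟶ Z), weq f → weq g → weq (f ≫ g)
  weq_cancel_left : ∀ ⦃X Y Z : C⦄ (f : X ⟶ Y) (g : Y ⟶ Z), weq f → weq (f ≫ g) → weq g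
  weq_cancel_right : ∀ ⦃X Y Z : C⦄ (f : X ⟶ Y) (g : Y ⟶ Z), weq g → weq (f ≫ g) → weq f
  weq_retract : ∀ ⦃X Y X' Y' : C⦄ (f : X ⟶ Y) (f' : X' ⟶ Y'),
    IsRetractOf f f' → weq f' → weq f
  cof_retract : ∀ ⦃X Y X' Y' : C⦄ (f : X ⟶ Y) (f' : X' ⟶ Y'),
    IsRetractOf f f' → cof f' → cof f
  fib_retract : ∀ ⦃X Y X' Y' : C⦄ (f : X ⟶ Y) (f' : X' ⟶ Y'),
    IsRetractOf f f' → fib f' → fib f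
  lift_trivCof_fib : ∀ ⦃A B X Y : C⦄ (i : A ⟶ B) (p : X ⟶ Y),
    cof i → weq i → fib p → HasLiftingProperty i p
  lift_cof_trivFib : ∀ ⦃A B X Y : C⦄ (i : A ⟶ B) (p : X ⟶ Y),
    cof i → fib p → weq p → HasLiftingProperty i p
  fact_cof_trivFib : ∀ ⦃X Y : C⦄ (f : X ⟶ Y),
    ∃ (Z : C) (i : X ⟶ Z) (p : Z ⟶ Y), cof i ∧ fib p ∧ weq p ∧ i ≫ p = f
  fact_trivCof_fib : ∀ ⦃X Y : C⦄ (f : X ⟶ Y),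
    ∃ (Z : C) (i : X ⟶ Z) (p : Z ⟶ Y), cof i ∧ weq i ∧ fib p ∧ i ≫ p = f

/-- An object `W` is fibrant for a model structure if every morphism to `W` extends along
every trivial cofibration, i.e. `W ⟶ *` has the right lifting property against trivial
cofibrations. -/
def ModelStructure.Fibrant (M : ModelStructure C) (W : C) : Prop :=
  ∀ ⦃A B : C⦄ (i : A ⟶ B), M.cof i → M.weq i → ∀ a : A ⟶ W, ∃ b : B ⟶ W, i ≫ b = a

lemma equivalence_of_refl_of_rightEuclidean {α : Sort*} {r : α → α → Prop}
    (refl : ∀ a, r a a) (euclid : ∀ a b c, r b a → r c a → r b c) : Equivalence r where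
  refl := refl
  symm {a b} hab := euclid b b a (refl b) hab
  trans {a b c} hab hbc := euclid b a c hab (euclid c c b (refl c) hbc)

lemma _root_.CategoryTheory.Functor.exists_map_inl_comp_eq_and_map_inr_comp_eq {D : Type*}
    [Category D] (G : C ⥤ D) {A B : C} {T : D} [HasBinaryCoproduct A B]
    [PreservesColimit (pair A B) G]
    (a : G.obj A ⟶ T) (b : G.obj B ⟶ T) :
    ∃ v : G.obj (A ⨿ B) ⟶ T, G.map coprod.inl ≫ v = a ∧ G.map coprod.inr ≫ v = b :=
  let ⟨v, hv⟩ :=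
    BinaryCofan.IsColimit.desc' (isColimitOfHasBinaryCoproductOfPreservesColimit G A B) a b
  ⟨v, hv⟩

namespace Cylinder

variable (E : Cylinder C)

lemma homotopy_refl {X Y : C} (f : X ⟶ Y) : E.Homotopy f f :=
  ⟨E.σ.app X ≫ f, by rw [← Category.assoc, E.d0_σ]; exact Category.id_comp f,
    by rw [← Category.assoc, E.d1_σ]; exact Category.id_comp f⟩

variable [HasColimits C]

lemma ι_comp_σ (X : C) : E.ι X ≫ E.σ.app X = codiag X := by
  apply coprod.hom_ext <;> simp [ι, E.d0_σ, E.d1_σ]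

lemma inl_comp_ι (X : C) : coprod.inl ≫ E.ι X = E.d0.app X := coprod.inl_desc _ _

lemma inr_comp_ι (X : C) : coprod.inr ≫ E.ι X = E.d1.app X := coprod.inr_desc _ _

lemma exists_extension_along_box1 {An : MorphismProperty C} {W : C} (hW : IsFibrantObj An W)
    {K M : C} {j : K ⟶ M} (hj : An (E.box1 j)) (a : M ⟶ W) (b : E.I.obj K ⟶ W)
    (hab : j ≫ a = E.d1.app K ≫ b) :
    ∃ H : E.I.obj M ⟶ W, E.d1.app M ≫ H = a ∧ E.I.map j ≫ H = b := by
  obtain ⟨H, hH⟩ := hW _ hj (pushout.desc a b hab)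
  refine ⟨H, ?_, ?_⟩
  · rw [← pushout.inl_desc a b hab, ← hH, ← Category.assoc, box1, pushout.inl_desc]
  · rw [← pushout.inr_desc a b hab, ← hH, ← Category.assoc, box1, pushout.inr_desc]

/-- Two homotopies `h : g ∼ f` and `h' : k ∼ f` glue, together with the constant homotopy at `f`,
to a map on the open box `I(X) ⊔_{X ⊔ X} I(X ⊔ X)`; its extension to `I(I(X))` restricts along
`∂0` to a homotopy `g ∼ k`. -/
lemma homotopy_rightEuclidean {An : MorphismProperty C} {W X : C} (hW : IsFibrantObj An W)
    [PreservesColimit (pair X X) E.I] (hX : An (E.box1 (E.ι X))) {f g k : X ⟶ W}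
    (hgf : E.Homotopy g f) (hkf : E.Homotopy k f) : E.Homotopy g k := by
  obtain ⟨h, hg, hf⟩ := hgf
  obtain ⟨h', hk, hf'⟩ := hkf
  obtain ⟨v, hvl, hvr⟩ := E.I.exists_map_inl_comp_eq_and_map_inr_comp_eq h h'
  have hbox : E.ι X ≫ E.σ.app X ≫ f = E.d1.app (X ⨿ X) ≫ v := by
    rw [← Category.assoc, ι_comp_σ]
    apply coprod.hom_ext
    · rw [reassoc_of% E.d1_naturality' (coprod.inl : X ⟶ X ⨿ X), hvl, hf]
      exact coprod.inl_desc_assoc _ _ f |>.trans (Category.id_comp f)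
    · rw [reassoc_of% E.d1_naturality' (coprod.inr : X ⟶ X ⨿ X), hvr, hf']
      exact coprod.inr_desc_assoc _ _ f |>.trans (Category.id_comp f)
  obtain ⟨H, -, hH⟩ := E.exists_extension_along_box1 hW hX _ v hbox
  refine ⟨E.d0.app (E.I.obj X) ≫ H, ?_, ?_⟩
  · rw [← Category.assoc, E.d0_naturality' (E.d0.app X), ← E.inl_comp_ι X, Functor.map_comp]
    simp only [Category.assoc, hH, hvl]
    exact hg
  · rw [← Category.assoc, E.d0_naturality' (E.d1.app X), ← E.inr_comp_ι X, Functor.map_comp]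
    simp only [Category.assoc, hH, hvr]
    exact hk

end Cylinder

theorem statement_3_general    {C : Type u} [Category.{v} C] [LocallyPresentable C]
    (L : MorphismProperty C)
    (E : Cylinder C) (hE : IsExactCylinder E L)
    (An : MorphismProperty C) (hAn : IsRightAnodyneClass E L An)
    (W : C) (hWfib : IsFibrantObj An W) (X : C) :
    Equivalence (fun f g : X ⟶ W => E.Homotopy f g) := by
  have := hE.preservesColimits
  exact equivalence_of_refl_of_rightEuclidean E.homotopy_refl fun _ _ _ =>
    E.homotopy_rightEuclidean hWfib (hAn.box1_mem _ (hE.ι_mem X))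

/-- Lemma 2.18: for a right `I`-fibrant object `W`, `I`-homotopy is an equivalence relation
on `Hom(X, W)`. -/
theorem statement_3    {C : Type u} [Category.{v} C] [LocallyPresentable C]
    (L R : MorphismProperty C) (hW : IsCofGenWFS L R)
    (E : Cylinder C) (hE : IsExactCylinder E L)
    (An : MorphismProperty C) (hAn : IsRightAnodyneClass E L An)
    (W : C) (hWfib : IsFibrantObj An W) (X : C) :
    Equivalence (fun f g : X ⟶ W => E.Homotopy f g) :=
  statement_3_general L E hE An hAn W hWfib X

end Paper
end

section
/- Let C be a locally presentable category with a cofibrantly generated weak factorization system (L, R) such that ∅ → X lies in L for every object X, equipped with an exact cylinder I. Then every morphism f : X → Y in the class R is the dual of a right deformation retract. -/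
/-! Since `f ∈ R` lifts against `∅ ⟶ Y`, it has a section `i`. Since it also lifts against
`(∂0, ∂1) : X ⊔ X ⟶ I(X)`, a lift in the square with top `(𝟙, f ≫ i)` and bottom `σ ≫ f`
is the required homotopy `h`. -/

set_option linter.unusedSectionVars false

open CategoryTheory CategoryTheory.Limits

universe v u

namespace Paper

variable {C : Type u} [Category.{v} C]

/-- `r : X ⟶ A` is the dual of a right deformation retract. -/
def Cylinder.IsDualRightDefRetract (E : Cylinder C) {X A : C} (r : X ⟶ A) : Prop :=
  ∃ (i : A ⟶ X) (h : E.I.obj X ⟶ X),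
    i ≫ r = 𝟙 A ∧ E.d0.app X ≫ h = 𝟙 X ∧ E.d1.app X ≫ h = r ≫ i ∧
    h ≫ r = E.σ.app X ≫ r

lemma exists_section_of_hasLiftingProperty_initial [HasInitial C] {X Y : C} (p : X ⟶ Y)
    [HasLiftingProperty (initial.to Y) p] : ∃ i : Y ⟶ X, i ≫ p = 𝟙 Y :=
  have sq : CommSq (initial.to X) (initial.to Y) p (𝟙 Y) := ⟨initial.hom_ext _ _⟩
  ⟨sq.lift, sq.fac_right⟩

lemma Cylinder.exists_homotopy_over [HasColimits C] (E : Cylinder C) {A X Y : C}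
    (p : X ⟶ Y) [HasLiftingProperty (E.ι A) p] (u v : A ⟶ X) (huv : u ≫ p = v ≫ p) :
    ∃ h : E.I.obj A ⟶ X,
      E.d0.app A ≫ h = u ∧ E.d1.app A ≫ h = v ∧ h ≫ p = E.σ.app A ≫ u ≫ p := by
  have sq : CommSq (coprod.desc u v) (E.ι A) p (E.σ.app A ≫ u ≫ p) := ⟨by
    apply coprod.hom_ext
    · simp only [Cylinder.ι, coprod.inl_desc_assoc, reassoc_of% (E.d0_σ A)]
    · simp only [Cylinder.ι, coprod.inr_desc_assoc, reassoc_of% (E.d1_σ A), huv]⟩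
  refine ⟨sq.lift, ?_, ?_, sq.fac_right⟩
  · simpa only [Cylinder.ι, coprod.inl_desc_assoc, coprod.inl_desc] using
      coprod.inl ≫= sq.fac_left
  · simpa only [Cylinder.ι, coprod.inr_desc_assoc, coprod.inr_desc] using
      coprod.inr ≫= sq.fac_left

/-- Proposition 2.22 (trivdual): every morphism in `R` is the dual of a right deformation
retract. -/
theorem statement_5    {C : Type u} [Category.{v} C] [LocallyPresentable C]
    (L R : MorphismProperty C) (hW : IsCofGenWFS L R)
    (E : Cylinder C) (hE : IsExactCylinder E L)
    ⦃X Y : C⦄ (f : X ⟶ Y) (hf : R f) :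
    E.IsDualRightDefRetract f := by
  have hfL : rlp L f := hW.rlp_eq ▸ hf
  have := hfL _ (hW.initial_mem Y)
  obtain ⟨i, hi⟩ := exists_section_of_hasLiftingProperty_initial f
  have := hfL _ (hE.ι_mem X)
  obtain ⟨h, h0, h1, hσ⟩ := E.exists_homotopy_over f (𝟙 X) (f ≫ i) (by simp [hi])
  exact ⟨i, h, hi, h0, h1, by simpa using hσ⟩

end Paper
end

section
/- Let C be a locally presentable category with a cofibrantly generated weak factorization system (L, R) such that ∅ → X lies in L for every object X, equipped with an exact cylinder I and a class An(I) of right I-anodyne extensions. Then a right I-fibration p : X → Y with right I-fibrant codomain Y is a weak equivalence (i.e., induces bijections p* : [Y, W]_I → [X, W]_I for all right I-fibrant W) if and only if it lies in the class R. -/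
set_option linter.unusedSectionVars false

open CategoryTheory CategoryTheory.Limits

universe v u

namespace Paper

variable {C : Type u} [Category.{v} C]

/-! If `p ∈ R`, lifting `∅ → Y` and `X ⊔ X → I X` against `p` gives a section `s` of `p` with
`1 ≃ p s`, so `s^*` inverts `p^*`. Conversely, into a fibrant object `I`-homotopy is already an
equivalence relation (fill open boxes along `∂1 ⊠ ∂I`), so bijectivity of `p^*` at `W = X, Y`
makes `p` a homotopy equivalence. As `∂1` is anodyne, the homotopy inverse lifts to a strict
section `t` of `p`, and one more box filling, now against `p`, makes the homotopy `1 ≃ p t`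
fibrewise over `Y`. Such a fibrewise deformation of `X` onto a section solves every lifting
problem of `i ∈ L` against `p`, by lifting `∂1 ⊠ i` against `p` and restricting to the end `0`. -/

section

variable [HasColimits C]

attribute [local simp] Cylinder.d0_σ Cylinder.d1_σ Cylinder.d0_naturality' Cylinder.d1_naturality'

namespace Cylinder

variable (E : Cylinder C)

@[simp]
lemma d0_σ_assoc {X T : C} (w : X ⟶ T) : E.d0.app X ≫ E.σ.app X ≫ w = w := by
  rw [← Category.assoc, d0_σ]
  exact Category.id_comp w

@[simp]
lemma d1_σ_assoc {X T : C} (w : X ⟶ T) : E.d1.app X ≫ E.σ.app X ≫ w = w := by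
  rw [← Category.assoc, d1_σ]
  exact Category.id_comp w

@[simp]
lemma d0_naturality_assoc {K M T : C} (f : K ⟶ M) (w : E.I.obj M ⟶ T) :
    f ≫ E.d0.app M ≫ w = E.d0.app K ≫ E.I.map f ≫ w := by
  rw [← Category.assoc, d0_naturality', Category.assoc]

@[simp]
lemma d1_naturality_assoc {K M T : C} (f : K ⟶ M) (w : E.I.obj M ⟶ T) :
    f ≫ E.d1.app M ≫ w = E.d1.app K ≫ E.I.map f ≫ w := by
  rw [← Category.assoc, d1_naturality', Category.assoc]

@[simp]
lemma inl_ι_assoc {Z T : C} (w : E.I.obj Z ⟶ T) : coprod.inl ≫ E.ι Z ≫ w = E.d0.app Z ≫ w :=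
  coprod.inl_desc_assoc _ _ _

@[simp]
lemma inr_ι_assoc {Z T : C} (w : E.I.obj Z ⟶ T) : coprod.inr ≫ E.ι Z ≫ w = E.d1.app Z ≫ w :=
  coprod.inr_desc_assoc _ _ _

lemma inl_box1 {K M : C} (f : K ⟶ M) : pushout.inl f (E.d1.app K) ≫ E.box1 f = E.d1.app M :=
  pushout.inl_desc _ _ _

lemma inr_box1 {K M : C} (f : K ⟶ M) : pushout.inr f (E.d1.app K) ≫ E.box1 f = E.I.map f :=
  pushout.inr_desc _ _ _

namespace Homotopy

variable {E}

lemma refl {X Y : C} (f : X ⟶ Y) : E.Homotopy f f :=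
  ⟨E.σ.app X ≫ f, by simp, by simp⟩

lemma comp_left {X Y Z : C} (k : X ⟶ Y) {f g : Y ⟶ Z} (h : E.Homotopy f g) :
    E.Homotopy (k ≫ f) (k ≫ g) := by
  obtain ⟨H, h0, h1⟩ := h
  exact ⟨E.I.map k ≫ H, by simp [← h0], by simp [← h1]⟩

lemma comp_right {X Y Z : C} {f g : X ⟶ Y} (h : E.Homotopy f g) (w : Y ⟶ Z) :
    E.Homotopy (f ≫ w) (g ≫ w) := by
  obtain ⟨H, h0, h1⟩ := h
  exact ⟨H ≫ w, by rw [← h0, Category.assoc], by rw [← h1, Category.assoc]⟩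

end Homotopy

section OpenBox

variable [PreservesColimitsOfShape (Discrete WalkingPair) E.I] {Z T : C}

noncomputable def pairDesc (β0 β1 : E.I.obj Z ⟶ T) : E.I.obj (Z ⨿ Z) ⟶ T :=
  inv (coprodComparison E.I Z Z) ≫ coprod.desc β0 β1

@[simp]
lemma map_inl_pairDesc (β0 β1 : E.I.obj Z ⟶ T) : E.I.map coprod.inl ≫ E.pairDesc β0 β1 = β0 := by
  rw [pairDesc, map_inl_inv_coprodComparison_assoc, coprod.inl_desc]

@[simp]
lemma map_inr_pairDesc (β0 β1 : E.I.obj Z ⟶ T) : E.I.map coprod.inr ≫ E.pairDesc β0 β1 = β1 := by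
  rw [pairDesc, map_inr_inv_coprodComparison_assoc, coprod.inr_desc]

/-- A map out of the domain of `∂1 ⊠ ∂I` on `Z`, i.e. an open box in `I (I Z)`: its outer face
at `1` is `α`, its inner faces at `0` and `1` are `β0` and `β1`. -/
noncomputable def openBox (α β0 β1 : E.I.obj Z ⟶ T)
    (h0 : E.d0.app Z ≫ α = E.d1.app Z ≫ β0) (h1 : E.d1.app Z ≫ α = E.d1.app Z ≫ β1) :
    pushout (E.ι Z) (E.d1.app (Z ⨿ Z)) ⟶ T :=
  pushout.desc α (E.pairDesc β0 β1) (by ext <;> simp [h0, h1])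

lemma faces_of_box1_comp_eq_openBox {α β0 β1 : E.I.obj Z ⟶ T}
    {h0 : E.d0.app Z ≫ α = E.d1.app Z ≫ β0} {h1 : E.d1.app Z ≫ α = E.d1.app Z ≫ β1}
    {H : E.I.obj (E.I.obj Z) ⟶ T} (hH : E.box1 (E.ι Z) ≫ H = E.openBox α β0 β1 h0 h1) :
    E.d0.app Z ≫ E.d0.app (E.I.obj Z) ≫ H = E.d0.app Z ≫ β0 ∧
      E.d1.app Z ≫ E.d0.app (E.I.obj Z) ≫ H = E.d0.app Z ≫ β1 := by
  have hinr : E.I.map (E.ι Z) ≫ H = E.pairDesc β0 β1 := by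
    have := pushout.inr _ _ ≫= hH
    rwa [← Category.assoc, inr_box1, openBox, pushout.inr_desc] at this
  have hβ0 : E.I.map (E.d0.app Z) ≫ H = β0 := by
    have := E.I.map coprod.inl ≫= hinr
    rwa [← Functor.map_comp_assoc, ι, coprod.inl_desc, map_inl_pairDesc] at this
  have hβ1 : E.I.map (E.d1.app Z) ≫ H = β1 := by
    have := E.I.map coprod.inr ≫= hinr
    rwa [← Functor.map_comp_assoc, ι, coprod.inr_desc, map_inr_pairDesc] at this
  rw [d0_naturality_assoc, hβ0, d0_naturality_assoc, hβ1]
  exact ⟨rfl, rfl⟩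

lemma map_coprod_hom_ext {φ ψ : E.I.obj (Z ⨿ Z) ⟶ T}
    (h0 : E.I.map coprod.inl ≫ φ = E.I.map coprod.inl ≫ ψ)
    (h1 : E.I.map coprod.inr ≫ φ = E.I.map coprod.inr ≫ ψ) : φ = ψ := by
  rw [← cancel_epi (coprodComparison E.I Z Z)]
  ext
  · rw [coprodComparison_inl_assoc, coprodComparison_inl_assoc, h0]
  · rw [coprodComparison_inr_assoc, coprodComparison_inr_assoc, h1]

variable {An : MorphismProperty C}

lemma homotopy_of_openBox (hbox : An (E.box1 (E.ι Z))) (hT : IsFibrantObj An T)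
    (α β0 β1 : E.I.obj Z ⟶ T)
    (h0 : E.d0.app Z ≫ α = E.d1.app Z ≫ β0) (h1 : E.d1.app Z ≫ α = E.d1.app Z ≫ β1) :
    E.Homotopy (E.d0.app Z ≫ β0) (E.d0.app Z ≫ β1) := by
  obtain ⟨H, hH⟩ := hT _ hbox (E.openBox α β0 β1 h0 h1)
  exact ⟨_, E.faces_of_box1_comp_eq_openBox hH⟩

lemma exists_fibrewise_homotopy_of_openBox (hbox : An (E.box1 (E.ι Z))) {X Y : C} {p : X ⟶ Y}
    (hp : IsFib An p) (α β0 β1 : E.I.obj Z ⟶ X) (v : E.I.obj (E.I.obj Z) ⟶ Y)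
    (h0 : E.d0.app Z ≫ α = E.d1.app Z ≫ β0) (h1 : E.d1.app Z ≫ α = E.d1.app Z ≫ β1)
    (hvα : α ≫ p = E.d1.app (E.I.obj Z) ≫ v)
    (hv0 : β0 ≫ p = E.I.map (E.d0.app Z) ≫ v) (hv1 : β1 ≫ p = E.I.map (E.d1.app Z) ≫ v) :
    ∃ k : E.I.obj Z ⟶ X, E.d0.app Z ≫ k = E.d0.app Z ≫ β0 ∧
      E.d1.app Z ≫ k = E.d0.app Z ≫ β1 ∧ k ≫ p = E.d0.app (E.I.obj Z) ≫ v := by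
  have := hp _ hbox
  have sq : CommSq (E.openBox α β0 β1 h0 h1) (E.box1 (E.ι Z)) p v := by
    constructor
    apply pushout.hom_ext
    · rw [openBox, pushout.inl_desc_assoc, ← Category.assoc, inl_box1, hvα]
    · rw [openBox, pushout.inr_desc_assoc, ← Category.assoc, inr_box1]
      apply map_coprod_hom_ext
      · rw [← Category.assoc, map_inl_pairDesc, hv0, ← Functor.map_comp_assoc, ι, coprod.inl_desc]
      · rw [← Category.assoc, map_inr_pairDesc, hv1, ← Functor.map_comp_assoc, ι, coprod.inr_desc]
  obtain ⟨e0, e1⟩ := E.faces_of_box1_comp_eq_openBox sq.fac_left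
  exact ⟨_, e0, e1, by rw [Category.assoc, sq.fac_right]⟩

end OpenBox

section FibrantTarget

variable {E} {An : MorphismProperty C} [PreservesColimitsOfShape (Discrete WalkingPair) E.I]
  {X W : C}

lemma Homotopy.symm (hbox : An (E.box1 (E.ι X))) (hW : IsFibrantObj An W) {f g : X ⟶ W}
    (h : E.Homotopy f g) : E.Homotopy g f := by
  obtain ⟨H, h0, h1⟩ := h
  simpa [h0] using E.homotopy_of_openBox hbox hW (E.σ.app X ≫ g) (E.σ.app X ≫ g) H
    (by simp) (by simp [h1])

lemma Homotopy.trans (hbox : An (E.box1 (E.ι X))) (hW : IsFibrantObj An W) {f g e : X ⟶ W}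
    (h : E.Homotopy f g) (h' : E.Homotopy g e) : E.Homotopy f e := by
  obtain ⟨H, h0, h1⟩ := h
  obtain ⟨H', h0', h1'⟩ := h'
  simpa [h0] using E.homotopy_of_openBox hbox hW H' H (E.σ.app X ≫ e)
    (by rw [h0', h1]) (by simp [h1'])

lemma hoHom_mk_eq_mk_iff (hbox : An (E.box1 (E.ι X))) (hW : IsFibrantObj An W) {f g : X ⟶ W} :
    (Quot.mk _ f : E.HoHom X W) = Quot.mk _ g ↔ E.Homotopy f g := by
  rw [Quot.eq]
  exact Equivalence.eqvGen_iff
    ⟨Homotopy.refl, (Homotopy.symm hbox hW ·), (Homotopy.trans hbox hW · ·)⟩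

end FibrantTarget

end Cylinder

open Cylinder

lemma IsRightAnodyneClass.d1_app_mem {E : Cylinder C} [PreservesColimit (Functor.empty.{0} C) E.I]
    {L An : MorphismProperty C} (hAn : IsRightAnodyneClass E L An) {M : C}
    (hM : L (initial.to M)) : An (E.d1.app M) := by
  have hI : IsInitial (E.I.obj (⊥_ C)) := isColimitOfHasInitialOfPreservesColimit E.I
  have := isIso_of_isInitial initialIsInitial hI (E.d1.app (⊥_ C))
  have hbox := hAn.box1_mem _ hM
  obtain ⟨Λ, -, -, rfl⟩ := hAn.exists_generating_set
  intro _ _ g hg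
  have := hbox g hg
  rw [← inl_box1 E (initial.to M)]
  infer_instance

lemma isFibrantObj_of_isFib {An : MorphismProperty C} {X Y : C} {p : X ⟶ Y}
    (hp : IsFib An p) (hY : IsFibrantObj An Y) : IsFibrantObj An X := by
  intro A B f hf a
  obtain ⟨b, hb⟩ := hY f hf (a ≫ p)
  have := hp f hf
  have sq : CommSq a f p b := ⟨hb.symm⟩
  exact ⟨sq.lift, sq.fac_left⟩

variable {E : Cylinder C} {L An : MorphismProperty C} {X Y : C} {p : X ⟶ Y}

lemma bijective_precompQ_of_section {s : Y ⟶ X} (hs : s ≫ p = 𝟙 Y)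
    (h : E.Homotopy (𝟙 X) (p ≫ s)) (W : C) : Function.Bijective (E.precompQ p W) := by
  refine Function.bijective_iff_has_inverse.2 ⟨E.precompQ s W, ?_, ?_⟩
  · rintro ⟨g⟩
    exact congrArg (Quot.mk _) (by rw [← Category.assoc, hs, Category.id_comp])
  · rintro ⟨f⟩
    exact (Quot.sound (by simpa using h.comp_right f)).symm

lemma exists_section_homotopy_of_rlp (hinit : L (initial.to Y)) (hι : L (E.ι X))
    (hp : rlp L p) : ∃ s : Y ⟶ X, s ≫ p = 𝟙 Y ∧ E.Homotopy (𝟙 X) (p ≫ s) := by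
  have := hp _ hinit
  have sq : CommSq (initial.to X) (initial.to Y) p (𝟙 Y) := ⟨initial.hom_ext _ _⟩
  have := hp _ hι
  have sq' : CommSq (coprod.desc (𝟙 X) (p ≫ sq.lift)) (E.ι X) p (E.σ.app X ≫ p) :=
    ⟨by
      apply coprod.hom_ext
      · rw [coprod.inl_desc_assoc, inl_ι_assoc]; simp
      · rw [coprod.inr_desc_assoc, inr_ι_assoc]; simp⟩
  exact ⟨sq.lift, sq.fac_right, sq'.lift,
    by rw [← inl_ι_assoc, sq'.fac_left, coprod.inl_desc],
    by rw [← inr_ι_assoc, sq'.fac_left, coprod.inr_desc]⟩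

lemma exists_homotopy_inverse_of_isWeakEq [PreservesColimitsOfShape (Discrete WalkingPair) E.I]
    (hboxX : An (E.box1 (E.ι X))) (hboxY : An (E.box1 (E.ι Y)))
    (hX : IsFibrantObj An X) (hY : IsFibrantObj An Y) (hw : IsWeakEq E An p) :
    ∃ s : Y ⟶ X, E.Homotopy (𝟙 X) (p ≫ s) ∧ E.Homotopy (𝟙 Y) (s ≫ p) := by
  obtain ⟨⟨s⟩, hs⟩ := (hw X hX).2 (Quot.mk _ (𝟙 X))
  have hps : E.Homotopy (𝟙 X) (p ≫ s) :=
    ((hoHom_mk_eq_mk_iff hboxX hX).1 hs).symm hboxX hX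
  refine ⟨s, hps, (hoHom_mk_eq_mk_iff hboxY hY).1 ((hw Y hY).1 ?_)⟩
  exact Quot.sound (by simpa using hps.comp_right p)

lemma exists_section_homotopic_of_isFib (hd1 : An (E.d1.app Y)) (hp : IsFib An p)
    {s : Y ⟶ X} (h : E.Homotopy (𝟙 Y) (s ≫ p)) : ∃ t : Y ⟶ X, t ≫ p = 𝟙 Y ∧ E.Homotopy t s := by
  obtain ⟨H, h0, h1⟩ := h
  have := hp _ hd1
  have sq : CommSq s (E.d1.app Y) p H := ⟨h1.symm⟩
  exact ⟨E.d0.app Y ≫ sq.lift, by rw [Category.assoc, sq.fac_right, h0], sq.lift, rfl, sq.fac_left⟩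

lemma exists_fibrewise_homotopy_of_section [PreservesColimitsOfShape (Discrete WalkingPair) E.I]
    (hbox : An (E.box1 (E.ι X))) (hp : IsFib An p) {t : Y ⟶ X} (ht : t ≫ p = 𝟙 Y)
    (h : E.Homotopy (𝟙 X) (p ≫ t)) :
    ∃ G : E.I.obj X ⟶ X,
      E.d0.app X ≫ G = 𝟙 X ∧ E.d1.app X ≫ G = p ≫ t ∧ G ≫ p = E.σ.app X ≫ p := by
  obtain ⟨G, G0, G1⟩ := h
  obtain ⟨G', e0, e1, ep⟩ := E.exists_fibrewise_homotopy_of_openBox hbox hp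
    (E.σ.app X ≫ p ≫ t) G (G ≫ p ≫ t) (E.I.map (E.σ.app X) ≫ G ≫ p)
    (by simp [G1]) (by simp [reassoc_of% G1, reassoc_of% ht])
    (by rw [← d1_naturality_assoc]; simp [reassoc_of% G1])
    (by simp [← Functor.map_comp_assoc]) (by simp [← Functor.map_comp_assoc, ht])
  refine ⟨G', by simpa [G0] using e0, by simpa [reassoc_of% G0] using e1, ?_⟩
  rw [ep, ← d0_naturality_assoc]
  simp [reassoc_of% G0]

lemma hasLiftingProperty_of_fibrewise_homotopy {A B : C} {i : A ⟶ B} (hbox : An (E.box1 i))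
    (hp : IsFib An p) {t : Y ⟶ X} (ht : t ≫ p = 𝟙 Y) {G : E.I.obj X ⟶ X}
    (G0 : E.d0.app X ≫ G = 𝟙 X) (G1 : E.d1.app X ≫ G = p ≫ t) (Gp : G ≫ p = E.σ.app X ≫ p) :
    HasLiftingProperty i p := by
  have := hp _ hbox
  refine ⟨fun {f g} sq => ?_⟩
  have hfg : i ≫ g ≫ t = E.d1.app A ≫ E.I.map f ≫ G := by
    rw [← d1_naturality_assoc, G1, reassoc_of% sq.w]
  have sq' : CommSq (pushout.desc (g ≫ t) (E.I.map f ≫ G) hfg) (E.box1 i) p (E.σ.app B ≫ g) := by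
    constructor
    apply pushout.hom_ext
    · rw [pushout.inl_desc_assoc, ← Category.assoc, inl_box1]; simp [ht]
    · rw [pushout.inr_desc_assoc, ← Category.assoc, inr_box1]; simp [Gp, sq.w]
  have hi : E.I.map i ≫ sq'.lift = E.I.map f ≫ G := by
    have := pushout.inr i (E.d1.app A) ≫= sq'.fac_left
    rwa [← Category.assoc, inr_box1, pushout.inr_desc] at this
  refine ⟨⟨⟨E.d0.app B ≫ sq'.lift, ?_, ?_⟩⟩⟩
  · rw [d0_naturality_assoc, hi, ← d0_naturality_assoc, G0, Category.comp_id]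
  · simp

end

/-- Proposition 2.25 (rfibtriv): a right `I`-fibration with right `I`-fibrant codomain is a
weak equivalence iff it is in `R`. -/
theorem statement_7    {C : Type u} [Category.{v} C] [LocallyPresentable C]
    (L R : MorphismProperty C) (hW : IsCofGenWFS L R)
    (E : Cylinder C) (hE : IsExactCylinder E L)
    (An : MorphismProperty C) (hAn : IsRightAnodyneClass E L An)
    ⦃X Y : C⦄ (p : X ⟶ Y) (hp : IsFib An p) (hY : IsFibrantObj An Y) :
    IsWeakEq E An p ↔ R p := by
  have := hE.preservesColimits
  have hbox (Z : C) : An (E.box1 (E.ι Z)) := hAn.box1_mem _ (hE.ι_mem Z)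
  rw [hW.rlp_eq]
  constructor
  · intro hw
    have hX := isFibrantObj_of_isFib hp hY
    obtain ⟨s, hps, hsp⟩ := exists_homotopy_inverse_of_isWeakEq (hbox X) (hbox Y) hX hY hw
    obtain ⟨t, htp, hts⟩ :=
      exists_section_homotopic_of_isFib (hAn.d1_app_mem (hW.initial_mem Y)) hp hsp
    have hpt : E.Homotopy (𝟙 X) (p ≫ t) :=
      hps.trans (hbox X) hX ((hts.comp_left p).symm (hbox X) hX)
    obtain ⟨G, G0, G1, Gp⟩ := exists_fibrewise_homotopy_of_section (hbox X) hp htp hpt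
    exact fun A B i hi =>
      hasLiftingProperty_of_fibrewise_homotopy (hAn.box1_mem i hi) hp htp G0 G1 Gp
  · intro hR
    obtain ⟨s, hs, h⟩ := exists_section_homotopy_of_rlp (hW.initial_mem Y) (hE.ι_mem X) hR
    exact fun W _ => bijective_precompQ_of_section hs h W

end Paper
end

section
/- Let C be a locally presentable category with a cofibrantly generated weak factorization system (L, R) such that ∅ → X lies in L for every object X, equipped with an exact cylinder I and a class An(I) of right I-anodyne extensions. Then the class of I-final maps satisfies the right cancellation property: for composable morphisms f : X → Y and g : Y → Z with f I-final, the morphism g is I-final if and only if the composite g ∘ f is I-final. -/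
set_option linter.unusedSectionVars false

open CategoryTheory CategoryTheory.Limits

universe v u

namespace Paper

variable {C : Type u} [Category.{v} C]

/-- Morphisms over `A` from `(X, u)` to `(W, q)`. -/
def OverHom {X W A : C} (u : X ⟶ A) (q : W ⟶ A) : Type v :=
  { g : X ⟶ W // g ≫ q = u }

namespace Cylinder

variable (E : Cylinder C)

/-- An `I`-homotopy over `A`. -/
def OverHomotopy {X W A : C} (u : X ⟶ A) (q : W ⟶ A)
    (g g' : OverHom u q) : Prop :=
  ∃ h : E.I.obj X ⟶ W, E.d0.app X ≫ h = g.1 ∧ E.d1.app X ≫ h = g'.1 ∧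
    h ≫ q = E.σ.app X ≫ u

/-- Homotopy classes of morphisms over `A`, `[(X, u), (W, q)]_{I_A}`. -/
def OverHoHom {X W A : C} (u : X ⟶ A) (q : W ⟶ A) : Type v :=
  Quot (E.OverHomotopy u q)

/-- Precomposition `[(Y, p), (W, q)]_{I_A} ⟶ [(X, f ≫ p), (W, q)]_{I_A}`. -/
def overPrecompQ {X Y A W : C} (f : X ⟶ Y) (p : Y ⟶ A) (q : W ⟶ A) :
    E.OverHoHom p q → E.OverHoHom (f ≫ p) q :=
  Quot.lift (fun g => Quot.mk _ ⟨f ≫ g.1, by rw [Category.assoc, g.2]⟩)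
    (by
      rintro g g' ⟨h, h0, h1, hq⟩
      apply Quot.sound
      refine ⟨E.I.map f ≫ h, ?_, ?_, ?_⟩
      · rw [← Category.assoc, ← E.d0_naturality' f, Category.assoc, h0]
      · rw [← Category.assoc, ← E.d1_naturality' f, Category.assoc, h1]
      · have hnat := E.σ.naturality f
        simp only [Functor.id_map] at hnat
        simp only [Category.assoc, hq]
        rw [← Category.assoc, hnat, Category.assoc])

end Cylinder

/-- A morphism `f : X ⟶ Y` is `I`-final if for every object `A`, every `p : Y ⟶ A` and
every right `I`-fibration `q : W ⟶ A`, the induced map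
`[(Y, p), (W, q)]_{I_A} ⟶ [(X, f ≫ p), (W, q)]_{I_A}` is bijective. -/
def IsFinal (E : Cylinder C) (An : MorphismProperty C) {X Y : C} (f : X ⟶ Y) : Prop :=
  ∀ (A : C) (p : Y ⟶ A) ⦃W : C⦄ (q : W ⟶ A), IsFib An q →
    Function.Bijective (E.overPrecompQ f p q)

/-- Cast of homotopy classes over `A` along an equality of structure maps. -/
def Cylinder.castHo (E : Cylinder C) {X W A : C} {u u' : X ⟶ A} (h : u = u') (q : W ⟶ A) :
    E.OverHoHom u q → E.OverHoHom u' q :=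
  Quot.map (fun a => ⟨a.1, by rw [a.2, h]⟩)
    (fun a b => fun ⟨k, k0, k1, kq⟩ => ⟨k, k0, k1, by rw [kq, h]⟩)

lemma Cylinder.castHo_bijective (E : Cylinder C) {X W A : C} {u u' : X ⟶ A} (h : u = u')
    (q : W ⟶ A) : Function.Bijective (E.castHo h q) := by
  rw [Function.bijective_iff_has_inverse]
  refine ⟨E.castHo h.symm q, ?_, ?_⟩ <;>
  · intro x
    induction x using Quot.ind with
    | _ a => rfl

lemma Cylinder.overPrecompQ_comp (E : Cylinder C) {X Y Z A W : C} (f : X ⟶ Y) (g : Y ⟶ Z)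
    (p : Z ⟶ A) (q : W ⟶ A) :
    E.overPrecompQ (f ≫ g) p q =
      (E.castHo (Category.assoc f g p).symm q) ∘
        E.overPrecompQ f (g ≫ p) q ∘ E.overPrecompQ g p q := by
  funext x
  induction x using Quot.ind with
  | _ a => exact congrArg (Quot.mk _) (Subtype.ext (Category.assoc f g a.1))

/-- Proposition 3.7: the `I`-final maps satisfy the right cancellation property. -/
theorem statement_11    {C : Type u} [Category.{v} C] [LocallyPresentable C]
    (L R : MorphismProperty C) (hW : IsCofGenWFS L R)
    (E : Cylinder C) (hE : IsExactCylinder E L)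
    (An : MorphismProperty C) (hAn : IsRightAnodyneClass E L An)
    ⦃X Y Z : C⦄ (f : X ⟶ Y) (g : Y ⟶ Z) (hf : IsFinal E An f) :
    IsFinal E An g ↔ IsFinal E An (f ≫ g) := by
  constructor
  · intro hg A p W q hq
    rw [E.overPrecompQ_comp f g p q]
    exact (E.castHo_bijective _ q).comp ((hf A (g ≫ p) q hq).comp (hg A p q hq))
  · intro hfg A p W q hq
    have h := hfg A p q hq
    rw [E.overPrecompQ_comp f g p q] at h
    have hF := hf A (g ≫ p) q hq
    have hC := E.castHo_bijective (Category.assoc f g p).symm q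
    constructor
    · intro x y hxy
      exact h.injective (by simp [Function.comp, hxy])
    · intro y
      obtain ⟨x, hx⟩ := h.surjective (E.castHo (Category.assoc f g p).symm q
        (E.overPrecompQ f (g ≫ p) q y))
      refine ⟨x, hF.injective (hC.injective hx)⟩

end Paper
end
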